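/- arXiv:2311.01884 — 3 statements merged into one kernel-verified Lean document; each statement's English description precedes it below -/
import Mathlib

section
/- Let G be a finite simple graph of maximum degree at most 3 of order n admitting an unfriendly partition {A, B} with |A| ≠ |B|. Then R(G) ≤ 1, i.e., |λ_h(G)| ≤ 1 and |λ_l(G)| ≤ 1 where h = ⌊(n+1)/2⌋ and l = ⌈(n+1)/2⌉. -/
open SimpleGraph Matrix

theorem adjMatrix_isHermitian {V : Type} [Fintype V] [DecidableEq V]
    (G : SimpleGraph V) [DecidableRel G.Adj] : (G.adjMatrix ℝ).IsHermitian := by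
  ext i j
  simp [Matrix.conjTranspose_apply, SimpleGraph.adj_comm]

/-- Multiset of adjacency eigenvalues. -/
noncomputable def adjSpectrum {V : Type} [Fintype V] [DecidableEq V]
    (G : SimpleGraph V) [DecidableRel G.Adj] : Multiset ℝ :=
  Finset.univ.val.map (adjMatrix_isHermitian G).eigenvalues

/-- the i-th largest adjacency eigenvalue (1-indexed). -/
noncomputable def eigval {V : Type} [Fintype V] [DecidableEq V]
    (G : SimpleGraph V) [DecidableRel G.Adj] (i : ℕ) : ℝ :=
  ((adjSpectrum G).sort (· ≤ ·)).getD (Fintype.card V - i) 0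

/-!
Let `S` be the larger side of the partition. A vertex of `S` has at least as many neighbours
outside `S` as inside and degree at most `3`, hence at most one neighbour in `S`; so for every
vector `x` supported on `S` we get `|xᵀ A x| ≤ xᵀ x` by AM-GM over the edges inside `S`.
By Sylvester's law of inertia, a subspace of dimension `|S| > n / 2` on which `xᵀ A x ≤ xᵀ x`
leaves at most `n - |S| < n / 2` eigenvalues above `1`, and likewise below `-1`.
Hence the two middle eigenvalues lie in `[-1, 1]`.
-/

open Finset Module

theorem ncard_pos_add_finrank_le_of_nonpos {E ι : Type*} [AddCommGroup E] [Module ℝ E]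
    [Fintype ι] (w : ι → ℝ) (e : E ≃ₗ[ℝ] ι → ℝ) {W : Submodule ℝ E}
    (hW : ∀ x ∈ W, ∑ i, w i * e x i ^ 2 ≤ 0) :
    {i | 0 < w i}.ncard + finrank ℝ W ≤ Fintype.card ι := by
  have key := QuadraticForm.sigPos_add_finrank_le_of_nonpos
    (Q := QuadraticMap.weightedSumSquares ℝ w) (V := W.map e.toLinearMap) (by
      rintro _ ⟨x, hx, rfl⟩
      simpa [QuadraticMap.weightedSumSquares_apply, sq] using hW x hx)
  rwa [QuadraticForm.sigPos_weightedSumSquares, e.finrank_map_eq, finrank_fintype_fun_eq_card]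
    at key

namespace Matrix.IsHermitian

variable {n : Type*} [Fintype n] [DecidableEq n] {M : Matrix n n ℝ}

noncomputable def eigenCoordinates (hM : M.IsHermitian) : (n → ℝ) ≃ₗ[ℝ] n → ℝ :=
  (WithLp.linearEquiv 2 ℝ (n → ℝ)).symm ≪≫ₗ hM.eigenvectorBasis.repr.toLinearEquiv ≪≫ₗ
    WithLp.linearEquiv 2 ℝ (n → ℝ)

theorem eigenCoordinates_apply (hM : M.IsHermitian) (x : n → ℝ) (i : n) :
    hM.eigenCoordinates x i = hM.eigenvectorBasis.repr (WithLp.toLp 2 x) i :=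
  rfl

theorem eigenCoordinates_mulVec (hM : M.IsHermitian) (x : n → ℝ) (i : n) :
    hM.eigenCoordinates (M *ᵥ x) i = hM.eigenvalues i * hM.eigenCoordinates x i := by
  have hMt : Mᵀ = M := by simpa [conjTranspose_eq_transpose_of_trivial] using hM.eq
  simp only [eigenCoordinates_apply, OrthonormalBasis.repr_apply_apply,
    EuclideanSpace.inner_eq_star_dotProduct, star_trivial]
  rw [dotProduct_comm, dotProduct_mulVec, ← mulVec_transpose, hMt, mulVec_eigenvectorBasis,
    smul_dotProduct, smul_eq_mul, dotProduct_comm]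

theorem eigenCoordinates_dotProduct (hM : M.IsHermitian) (x y : n → ℝ) :
    hM.eigenCoordinates x ⬝ᵥ hM.eigenCoordinates y = x ⬝ᵥ y := by
  have := hM.eigenvectorBasis.repr.inner_map_map (WithLp.toLp 2 y) (WithLp.toLp 2 x)
  simp only [EuclideanSpace.inner_eq_star_dotProduct, star_trivial] at this
  exact this

theorem dotProduct_self_eq_sum_eigenCoordinates (hM : M.IsHermitian) (x : n → ℝ) :
    x ⬝ᵥ x = ∑ i, hM.eigenCoordinates x i ^ 2 := by
  rw [← hM.eigenCoordinates_dotProduct, dotProduct]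
  simp only [sq]

theorem dotProduct_mulVec_eq_sum_eigenCoordinates (hM : M.IsHermitian) (x : n → ℝ) :
    x ⬝ᵥ M *ᵥ x = ∑ i, hM.eigenvalues i * hM.eigenCoordinates x i ^ 2 := by
  rw [← hM.eigenCoordinates_dotProduct, dotProduct]
  exact sum_congr rfl fun i _ => by rw [eigenCoordinates_mulVec]; ring

theorem sum_sub_mul_eigenCoordinates_sq (hM : M.IsHermitian) (c : ℝ) (x : n → ℝ) :
    ∑ i, (hM.eigenvalues i - c) * hM.eigenCoordinates x i ^ 2 =
      x ⬝ᵥ M *ᵥ x - c * (x ⬝ᵥ x) := by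
  simp only [hM.dotProduct_mulVec_eq_sum_eigenCoordinates,
    hM.dotProduct_self_eq_sum_eigenCoordinates, mul_sum, sub_mul, sum_sub_distrib]

theorem ncard_lt_eigenvalues_add_finrank_le (hM : M.IsHermitian) (c : ℝ)
    {W : Submodule ℝ (n → ℝ)} (hW : ∀ x ∈ W, x ⬝ᵥ M *ᵥ x ≤ c * (x ⬝ᵥ x)) :
    {i | c < hM.eigenvalues i}.ncard + finrank ℝ W ≤ Fintype.card n := by
  simpa only [sub_pos] using ncard_pos_add_finrank_le_of_nonpos (fun i => hM.eigenvalues i - c)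
    hM.eigenCoordinates fun x hx => by
      rw [sum_sub_mul_eigenCoordinates_sq]; linarith [hW x hx]

theorem ncard_eigenvalues_lt_add_finrank_le (hM : M.IsHermitian) (c : ℝ)
    {W : Submodule ℝ (n → ℝ)} (hW : ∀ x ∈ W, c * (x ⬝ᵥ x) ≤ x ⬝ᵥ M *ᵥ x) :
    {i | hM.eigenvalues i < c}.ncard + finrank ℝ W ≤ Fintype.card n := by
  simpa only [sub_pos] using ncard_pos_add_finrank_le_of_nonpos (fun i => c - hM.eigenvalues i)
    hM.eigenCoordinates fun x hx => by
      simp only [← neg_sub (hM.eigenvalues _), neg_mul, sum_neg_distrib,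
        sum_sub_mul_eigenCoordinates_sq]
      linarith [hW x hx]

end Matrix.IsHermitian

namespace List

variable {α : Type*} [Preorder α] [DecidableLT α] {s : List α} {k : ℕ} {c : α}

theorem Pairwise.length_sub_le_countP_of_lt_getElem (hs : s.Pairwise (· ≤ ·)) (hk : k < s.length)
    (hc : c < s[k]) : s.length - k ≤ s.countP (c < ·) := by
  have hdrop : ∀ a ∈ s.drop k, c < a := by
    intro a ha
    obtain ⟨j, hj, rfl⟩ := mem_iff_getElem.mp ha
    rw [getElem_drop]
    exact hc.trans_le (by grind [pairwise_iff_getElem])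
  calc s.length - k = (s.drop k).countP (c < ·) := by
        rw [countP_eq_length.mpr (by simpa using hdrop), length_drop]
    _ ≤ s.countP (c < ·) := (drop_sublist k s).countP_le

theorem Pairwise.succ_le_countP_of_getElem_lt (hs : s.Pairwise (· ≤ ·)) (hk : k < s.length)
    (hc : s[k] < c) : k + 1 ≤ s.countP (· < c) := by
  have htake : ∀ a ∈ s.take (k + 1), a < c := by
    intro a ha
    obtain ⟨j, hj, rfl⟩ := mem_iff_getElem.mp ha
    rw [getElem_take]
    exact lt_of_le_of_lt (by grind [pairwise_iff_getElem]) hc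
  calc k + 1 = (s.take (k + 1)).countP (· < c) := by
        rw [countP_eq_length.mpr (by simpa using htake), length_take]; omega
    _ ≤ s.countP (· < c) := (take_sublist _ s).countP_le

end List

namespace SimpleGraph

variable {V : Type} [Fintype V] [DecidableEq V] (G : SimpleGraph V) [DecidableRel G.Adj]

theorem card_neighborFinset_inter_le_one {S : Finset V} {v : V} (hdeg : G.degree v ≤ 3)
    (hv : #(G.neighborFinset v ∩ S) ≤ #(G.neighborFinset v ∩ Sᶜ)) :
    #(G.neighborFinset v ∩ S) ≤ 1 := by
  have := card_inter_add_card_sdiff (G.neighborFinset v) S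
  rw [sdiff_eq_inter_compl, card_neighborFinset_eq_degree] at this
  omega

theorem abs_dotProduct_adjMatrix_mulVec_le {S : Finset V} {d : ℕ}
    (hS : ∀ v ∈ S, #(G.neighborFinset v ∩ S) ≤ d) {x : V → ℝ} (hx : ∀ v ∉ S, x v = 0) :
    |x ⬝ᵥ G.adjMatrix ℝ *ᵥ x| ≤ d * (x ⬝ᵥ x) := by
  have hexpand : x ⬝ᵥ G.adjMatrix ℝ *ᵥ x = ∑ v ∈ S, ∑ u ∈ G.neighborFinset v ∩ S, x v * x u := by
    simp only [dotProduct, adjMatrix_mulVec_apply, mul_sum]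
    rw [← sum_subset (subset_univ S) fun v _ hv => by simp [hx v hv]]
    refine sum_congr rfl fun v _ => ?_
    rw [← filter_mem_eq_inter, sum_filter_of_ne fun u _ hu => ?_]
    by_contra h
    simp [hx u h] at hu
  have hswap : ∑ v ∈ S, ∑ u ∈ G.neighborFinset v ∩ S, x u ^ 2 =
      ∑ v ∈ S, ∑ u ∈ G.neighborFinset v ∩ S, x v ^ 2 :=
    sum_comm' fun v u => by simp only [mem_inter, mem_neighborFinset, G.adj_comm]; tauto
  calc |x ⬝ᵥ G.adjMatrix ℝ *ᵥ x|
      ≤ ∑ v ∈ S, ∑ u ∈ G.neighborFinset v ∩ S, |x v * x u| := by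
        rw [hexpand]
        exact (abs_sum_le_sum_abs _ _).trans (sum_le_sum fun v _ => abs_sum_le_sum_abs _ _)
    _ ≤ ∑ v ∈ S, ∑ u ∈ G.neighborFinset v ∩ S, (x v ^ 2 + x u ^ 2) / 2 := by
        gcongr with v _ u _
        rw [abs_mul]
        nlinarith [sq_nonneg (|x v| - |x u|), sq_abs (x v), sq_abs (x u)]
    _ = ∑ v ∈ S, #(G.neighborFinset v ∩ S) * x v ^ 2 := by
        simp only [add_div, sum_add_distrib, ← sum_div, hswap, sum_const, nsmul_eq_mul]; ring
    _ ≤ ∑ v ∈ S, d * x v ^ 2 := sum_le_sum fun v hv => by gcongr; exact_mod_cast hS v hv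
    _ ≤ d * (x ⬝ᵥ x) := by
        rw [← mul_sum, dotProduct]
        gcongr
        simpa only [sq] using sum_le_univ_sum_of_nonneg fun v => mul_self_nonneg (x v)

theorem length_sort_adjSpectrum :
    ((adjSpectrum G).sort (· ≤ ·)).length = Fintype.card V := by
  simp [adjSpectrum]

theorem countP_sort_adjSpectrum (p : ℝ → Prop) [DecidablePred p] :
    ((adjSpectrum G).sort (· ≤ ·)).countP p =
      {i | p ((adjMatrix_isHermitian G).eigenvalues i)}.ncard := by
  rw [← Multiset.coe_countP, Multiset.sort_eq, adjSpectrum, Multiset.countP_map,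
    Set.ncard_eq_toFinset_card', Set.toFinset_ofPred]
  rfl

theorem eigval_le_of_ncard_lt {k : ℕ} (hk : k ≤ Fintype.card V) {c : ℝ}
    (h : {i | c < (adjMatrix_isHermitian G).eigenvalues i}.ncard < k) : eigval G k ≤ c := by
  by_contra! hc
  have hidx : Fintype.card V - k < ((adjSpectrum G).sort (· ≤ ·)).length := by
    rw [length_sort_adjSpectrum]; omega
  rw [eigval, List.getD_eq_getElem?_getD, List.getElem?_eq_getElem hidx, Option.getD_some] at hc
  have := (Multiset.pairwise_sort _ _).length_sub_le_countP_of_lt_getElem hidx hc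
  rw [countP_sort_adjSpectrum, length_sort_adjSpectrum] at this
  omega

theorem le_eigval_of_ncard_le {k : ℕ} (hk₀ : 1 ≤ k) (hk : k ≤ Fintype.card V) {c : ℝ}
    (h : {i | (adjMatrix_isHermitian G).eigenvalues i < c}.ncard ≤ Fintype.card V - k) :
    c ≤ eigval G k := by
  by_contra! hc
  have hidx : Fintype.card V - k < ((adjSpectrum G).sort (· ≤ ·)).length := by
    rw [length_sort_adjSpectrum]; omega
  rw [eigval, List.getD_eq_getElem?_getD, List.getElem?_eq_getElem hidx, Option.getD_some] at hc
  have := (Multiset.pairwise_sort _ _).succ_le_countP_of_getElem_lt hidx hc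
  rw [countP_sort_adjSpectrum] at this
  omega

theorem abs_eigval_le_of_forall_abs_dotProduct_le {W : Submodule ℝ (V → ℝ)} {c : ℝ}
    (hW : ∀ x ∈ W, |x ⬝ᵥ G.adjMatrix ℝ *ᵥ x| ≤ c * (x ⬝ᵥ x)) {k : ℕ}
    (hk₀ : Fintype.card V < finrank ℝ W + k) (hk : k ≤ finrank ℝ W) : |eigval G k| ≤ c := by
  have hM := adjMatrix_isHermitian G
  have hWn : finrank ℝ W ≤ Fintype.card V := W.finrank_le.trans (finrank_fintype_fun_eq_card ℝ).le
  have hgt := hM.ncard_lt_eigenvalues_add_finrank_le c fun x hx => (le_abs_self _).trans (hW x hx)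
  have hlt := hM.ncard_eigenvalues_lt_add_finrank_le (-c) fun x hx => by
    linarith [neg_abs_le (x ⬝ᵥ G.adjMatrix ℝ *ᵥ x), hW x hx]
  rw [abs_le]
  exact ⟨G.le_eigval_of_ncard_le (by omega) (by omega) (by omega),
    G.eigval_le_of_ncard_lt (by omega) (by omega)⟩

end SimpleGraph

theorem hl_index_le_one_of_unbalanced_unfriendly
    {V : Type} [Fintype V] [DecidableEq V]
    (G : SimpleGraph V) [DecidableRel G.Adj]
    (hdeg : ∀ v : V, G.degree v ≤ 3) (A : Finset V)
    (hA : ∀ v ∈ A, (G.neighborFinset v ∩ A).card ≤ (G.neighborFinset v ∩ Aᶜ).card)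
    (hB : ∀ v ∈ Aᶜ, (G.neighborFinset v ∩ Aᶜ).card ≤ (G.neighborFinset v ∩ A).card)
    (hunbal : A.card ≠ Aᶜ.card) :
    |eigval G ((Fintype.card V + 1) / 2)| ≤ 1 ∧
    |eigval G ((Fintype.card V + 2) / 2)| ≤ 1 := by
  obtain ⟨S, hS, hSlarge⟩ : ∃ S : Finset V,
      (∀ v ∈ S, #(G.neighborFinset v ∩ S) ≤ #(G.neighborFinset v ∩ Sᶜ)) ∧
        Fintype.card V < 2 * #S := by
    have := card_add_card_compl A
    rcases hunbal.lt_or_gt with h | h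
    · exact ⟨Aᶜ, by simpa only [compl_compl] using hB, by omega⟩
    · exact ⟨A, hA, by omega⟩
  have hW : ∀ x ∈ Pi.spanSubset ℝ (S : Set V), |x ⬝ᵥ G.adjMatrix ℝ *ᵥ x| ≤ 1 * (x ⬝ᵥ x) :=
    fun x hx => by
      exact_mod_cast G.abs_dotProduct_adjMatrix_mulVec_le
        (fun v hv => G.card_neighborFinset_inter_le_one (hdeg v) (hS v hv))
        (Pi.mem_spanSubset_iff.mp hx)
  have hdim : finrank ℝ (Pi.spanSubset ℝ (S : Set V)) = #S := by
    rw [Pi.dim_spanSubset, Set.ncard_coe_finset]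
  exact ⟨G.abs_eigval_le_of_forall_abs_dotProduct_le hW (by omega) (by omega),
    G.abs_eigval_le_of_forall_abs_dotProduct_le hW (by omega) (by omega)⟩
end

section
/- Let G be a subcubic graph containing K_{2,3} as a subgraph with bipartition classes {x_1, x_2} and {y_1, y_2, y_3}, and let {A, B} be any unfriendly partition of V(G). Then x_1 and x_2 lie in the same part of the partition, and all of y_1, y_2, y_3 lie in the other part. -/
open SimpleGraph Matrix

lemma card_split {V : Type} [Fintype V] [DecidableEq V] (G : SimpleGraph V) [DecidableRel G.Adj] (A : Finset V) (v : V) :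
    (G.neighborFinset v ∩ A).card + (G.neighborFinset v ∩ Aᶜ).card = G.degree v := by
  have h : G.neighborFinset v ∩ Aᶜ = G.neighborFinset v \ A := by
    simp [Finset.sdiff_eq_inter_compl]
  rw [h, Finset.card_inter_add_card_sdiff, SimpleGraph.degree]

theorem K23_placement_in_unfriendly_partition
    {V : Type} [Fintype V] [DecidableEq V]
    (G : SimpleGraph V) [DecidableRel G.Adj]
    (hdeg : ∀ v : V, G.degree v ≤ 3)
    (x₁ x₂ y₁ y₂ y₃ : V)
    (hnodup : ([x₁, x₂, y₁, y₂, y₃] : List V).Nodup)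
    (h11 : G.Adj x₁ y₁) (h12 : G.Adj x₁ y₂) (h13 : G.Adj x₁ y₃)
    (h21 : G.Adj x₂ y₁) (h22 : G.Adj x₂ y₂) (h23 : G.Adj x₂ y₃)
    (A : Finset V)
    (hA : ∀ v ∈ A, (G.neighborFinset v ∩ A).card ≤ (G.neighborFinset v ∩ Aᶜ).card)
    (hB : ∀ v ∈ Aᶜ, (G.neighborFinset v ∩ Aᶜ).card ≤ (G.neighborFinset v ∩ A).card) :
    (x₁ ∈ A ↔ x₂ ∈ A) ∧ (y₁ ∈ A ↔ x₁ ∉ A) ∧ (y₂ ∈ A ↔ x₁ ∉ A) ∧ (y₃ ∈ A ↔ x₁ ∉ A) := by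
  simp only [List.nodup_cons, List.mem_cons, List.mem_singleton, List.nodup_nil,
    List.not_mem_nil, or_false, not_or, List.mem_singleton, and_true] at hnodup
  obtain ⟨⟨hx12, hx1y1, hx1y2, hx1y3⟩, ⟨hx2y1, hx2y2, hx2y3⟩, ⟨hy12, hy13⟩, hy23, -⟩ := hnodup
  set s : Finset V := {y₁, y₂, y₃} with hs
  have hscard : s.card = 3 := by
    rw [hs]
    rw [Finset.card_insert_of_notMem (by simp [hy12, hy13]),
        Finset.card_insert_of_notMem (by simp [hy23])]
    simp
  have hN : ∀ x : V, G.Adj x y₁ → G.Adj x y₂ → G.Adj x y₃ → G.neighborFinset x = s := by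
    intro x a1 a2 a3
    have hsub : s ⊆ G.neighborFinset x := by
      intro z hz
      simp only [hs, Finset.mem_insert, Finset.mem_singleton] at hz
      rcases hz with rfl | rfl | rfl <;> simp [a1, a2, a3]
    refine (Finset.eq_of_subset_of_card_le hsub ?_).symm
    rw [hscard]; exact hdeg x
  have hN1 := hN x₁ h11 h12 h13
  have hN2 := hN x₂ h21 h22 h23
  have d1 : G.degree x₁ = 3 := by
    rw [← SimpleGraph.card_neighborFinset_eq_degree, hN1, hscard]
  have d2 : G.degree x₂ = 3 := by
    rw [← SimpleGraph.card_neighborFinset_eq_degree, hN2, hscard]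
  have key : x₁ ∈ A ↔ x₂ ∈ A := by
    constructor
    · intro h1
      by_contra h2
      have c1 := hA x₁ h1
      have c2 := hB x₂ (by simpa using h2)
      have e1 := card_split G A x₁
      have e2 := card_split G A x₂
      rw [hN1] at c1 e1
      rw [hN2] at c2 e2
      omega
    · intro h2
      by_contra h1
      have c1 := hB x₁ (by simpa using h1)
      have c2 := hA x₂ h2
      have e1 := card_split G A x₁
      have e2 := card_split G A x₂
      rw [hN1] at c1 e1
      rw [hN2] at c2 e2
      omega
  have hy : ∀ y : V, G.Adj x₁ y → G.Adj x₂ y → (y ∈ A ↔ x₁ ∉ A) := by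
    intro y a1 a2
    have hdegs := card_split G A y
    have hxsub : ∀ (T : Finset V), x₁ ∈ T → x₂ ∈ T →
        2 ≤ (G.neighborFinset y ∩ T).card := by
      intro T ht1 ht2
      have : ({x₁, x₂} : Finset V) ⊆ G.neighborFinset y ∩ T := by
        intro z hz
        simp only [Finset.mem_insert, Finset.mem_singleton] at hz
        rcases hz with rfl | rfl <;>
          simp [Finset.mem_inter, a1.symm, a2.symm, ht1, ht2]
      calc 2 = ({x₁, x₂} : Finset V).card := by
                rw [Finset.card_insert_of_notMem (by simp [hx12])]; simp
        _ ≤ _ := Finset.card_le_card this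
    by_cases h1 : x₁ ∈ A
    · have h2 : x₂ ∈ A := key.mp h1
      have hlow := hxsub A h1 h2
      simp only [h1, not_true, iff_false]
      intro hy
      have := hA y hy
      have := hdeg y
      omega
    · have h2 : x₂ ∉ A := fun h => h1 (key.mpr h)
      have hlow := hxsub Aᶜ (by simpa using h1) (by simpa using h2)
      simp only [h1, not_false_iff, iff_true]
      by_contra hy
      have := hB y (by simpa using hy)
      have := hdeg y
      omega
  exact ⟨key, hy y₁ h11 h21, hy y₂ h12 h22, hy y₃ h13 h23⟩
end

section
/- Let G be a 2-connected K_4-minor-free subcubic graph that contains the complete bipartite graph K_{2,3} in the following configuration: a longest cycle C of G and a path P edge-disjoint from C joining u, v ∈ V(C) with N(u) ∩ V(C) = N(v) ∩ V(C) = {u_1, u_2} (i.e., u and v have the same two neighbors on C). Then G is isomorphic to K_{2,3}. -/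
open SimpleGraph Matrix

/-- `G` has a `K₄` minor: four nonempty, pairwise disjoint, connected branch sets,
each pair joined by an edge of `G`. -/
def HasK4Minor {V : Type} (G : SimpleGraph V) : Prop :=
  ∃ B : Fin 4 → Set V,
    (∀ i, (B i).Nonempty) ∧
    (∀ i, (G.induce (B i)).Connected) ∧
    (Pairwise fun i j => Disjoint (B i) (B j)) ∧
    (∀ i j, i ≠ j → ∃ a ∈ B i, ∃ b ∈ B j, G.Adj a b)

/-!
The vertices `u` and `v` have the same two neighbours `u₁, u₂` along the longest cycle `C`, which
forces `C = u u₁ v u₂`, so every cycle of `G` has length at most `4`. An inner vertex of `P` lying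
on `C` has two `P`-edges and two `C`-edges, hence degree `4`; so `u₁ ∉ P`, the cycle `u₁ P` has
length `|P| + 2 ≤ 4`, and `P = u t v` with `t ∉ {u₁, u₂}` since `P` avoids the edges of `C`.
This gives a `K_{2,3}` with parts `{u, v}` and `{u₁, u₂, t}`, and the degree bound leaves `u` and
`v` no further neighbours. A path between two vertices of `{u₁, u₂, t}` avoiding the rest of the
`K_{2,3}` closes, through `u`, `v` and the third vertex, a cycle of length at least `5`. Such a
path would be an edge between them, or would arise by `2`-connectivity from any further neighbour
of `u₁`, `u₂` or `t`. Hence `G` is this `K_{2,3}`.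
-/

namespace SimpleGraph

variable {V : Type*} {G : SimpleGraph V}

lemma Subgraph.ncard_neighborSet_add_ncard_neighborSet_le_degree {x : V}
    [Fintype (G.neighborSet x)] {H K : G.Subgraph} (h : Disjoint H.edgeSet K.edgeSet) :
    (H.neighborSet x).ncard + (K.neighborSet x).ncard ≤ G.degree x := by
  have hdisj : Disjoint (H.neighborSet x) (K.neighborSet x) :=
    Set.disjoint_left.2 fun _ hH hK =>
      Set.disjoint_left.1 h (Subgraph.mem_edgeSet.2 hH) (Subgraph.mem_edgeSet.2 hK)
  have hfin := (G.neighborSet x).toFinite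
  rw [← Set.ncard_union_eq hdisj (hfin.subset (H.neighborSet_subset x))
    (hfin.subset (K.neighborSet_subset x)), ← card_neighborSet_eq_degree,
    ← Set.toFinset_card, ← Set.ncard_eq_toFinset_card']
  exact Set.ncard_le_ncard (Set.union_subset (H.neighborSet_subset x) (K.neighborSet_subset x))

namespace Walk

lemma exists_walk_notMem_adj_mem {S : Set V} :
    ∀ {x y : V} (p : G.Walk x y), x ∉ S → y ∈ S →
      ∃ a, ∃ b ∈ p.support, b ∈ S ∧ G.Adj a b ∧ ∃ q : G.Walk x a, ∀ w ∈ q.support, w ∉ S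
  | _, _, nil, hx, hy => (hx hy).elim
  | x, _, cons (v := x') h p, hx, hy => by
    by_cases hx' : x' ∈ S
    · exact ⟨x, x', by simp, hx', h, nil, by simpa⟩
    · obtain ⟨a, b, hb, hbS, hab, q, hq⟩ := p.exists_walk_notMem_adj_mem hx' hy
      exact ⟨a, b, by simp [hb], hbS, hab, cons h q, by simpa [hx] using hq⟩

lemma exists_eq_cons_cons_nil_of_length_eq_two {u v : V} {p : G.Walk u v}
    (h : p.length = 2) :
    ∃ t, ∃ (hut : G.Adj u t) (htv : G.Adj t v), p = cons hut (cons htv nil) := by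
  rcases p with _ | ⟨hut, _ | ⟨htv, _ | ⟨_, p⟩⟩⟩
  · simp at h
  · simp at h
  · exact ⟨_, hut, htv, rfl⟩
  · simp only [length_cons] at h
    omega

lemma IsPath.isCycle_cons_cons {u v x : V} {P : G.Walk u v} (hP : P.IsPath) (huv : u ≠ v)
    (hx : x ∉ P.support) (hxu : G.Adj x u) (hvx : G.Adj v x) :
    (cons hvx (cons hxu P)).IsCycle := by
  refine (cons_isCycle_iff _ _).2 ⟨hP.cons hx, fun h => ?_⟩
  rcases List.mem_cons.1 (edges_cons hxu P ▸ h) with h | h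
  · rcases Sym2.eq_iff.1 h with ⟨rfl, -⟩ | ⟨rfl, -⟩
    exacts [hvx.ne rfl, huv rfl]
  · exact hx (P.snd_mem_support_of_mem_edges h)

lemma IsCycle.neighborSet_toSubgraph_eq_pair {w x a b : V} {C : G.Walk w w} (hC : C.IsCycle)
    (hx : x ∈ C.support) (hab : a ≠ b) (hN : {y | G.Adj x y ∧ y ∈ C.support} ⊆ {a, b}) :
    C.toSubgraph.neighborSet x = {a, b} :=
  Set.eq_of_subset_of_ncard_le
    (fun _ hy => hN ⟨C.toSubgraph.adj_sub hy, mem_support_of_adj_toSubgraph hy.symm⟩)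
    (by rw [Set.ncard_pair hab, hC.ncard_neighborSet_toSubgraph_eq_two hx])

lemma IsCycle.length_eq_four_of_neighborSet_eq {w u v : V} {C : G.Walk w w} (hC : C.IsCycle)
    (hu : u ∈ C.support) (hv : v ∈ C.support) (huv : u ≠ v)
    (hN : C.toSubgraph.neighborSet u = C.toSubgraph.neighborSet v) : C.length = 4 := by
  classical
  rw [← C.length_rotate u hu]
  rw [← C.toSubgraph_rotate hu] at hN
  replace hv := (C.mem_support_rotate_iff u hu).2 hv
  replace hC := hC.rotate hu
  generalize C.rotate u hu = D at *
  obtain ⟨j, rfl, hj⟩ := mem_support_iff_exists_getVert.1 hv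
  have h3 := hC.three_le_length
  have hj0 : j ≠ 0 := by rintro rfl; exact huv (getVert_zero D).symm
  have hjn : j ≠ D.length := by rintro rfl; exact huv (getVert_length D).symm
  rw [hC.neighborSet_toSubgraph_endpoint,
    hC.neighborSet_toSubgraph_internal hj0 (by omega)] at hN
  have hends : ∀ k, D.getVert k ∈ ({D.getVert (j - 1), D.getVert (j + 1)} : Set V) →
      D.getVert k = D.getVert 1 ∨ D.getVert k = D.getVert (D.length - 1) := by
    intro k hk
    rwa [← hN] at hk
  rcases hends (j - 1) (by simp) with h | h
  · have : j - 1 = 1 := hC.getVert_injOn' (show j - 1 ≤ D.length - 1 by omega)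
      (show 1 ≤ D.length - 1 by omega) h
    rcases hends (j + 1) (by simp) with h' | h' <;>
    · have := hC.getVert_injOn ⟨by omega, by omega⟩ ⟨by omega, by omega⟩ h'
      omega
  · have := hC.getVert_injOn' (show j - 1 ≤ D.length - 1 by omega)
      (show D.length - 1 ≤ D.length - 1 by omega) h
    omega

lemma IsPath.four_le_degree_of_isCycle {w u v x : V} [Fintype (G.neighborSet x)]
    {C : G.Walk w w} (hC : C.IsCycle) (hxC : x ∈ C.support) {P : G.Walk u v} (hP : P.IsPath)
    (hxP : x ∈ P.support) (hxu : x ≠ u) (hxv : x ≠ v) (hPC : ∀ e ∈ P.edges, e ∉ C.edges) :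
    4 ≤ G.degree x := by
  obtain ⟨i, rfl, hi⟩ := mem_support_iff_exists_getVert.1 hxP
  have hi0 : i ≠ 0 := by rintro rfl; exact hxu (getVert_zero P)
  have hin : i < P.length := lt_of_le_of_ne hi (by rintro rfl; exact hxv (getVert_length P))
  have hdisj : Disjoint P.toSubgraph.edgeSet C.toSubgraph.edgeSet := by
    rw [edgeSet_toSubgraph, edgeSet_toSubgraph]
    exact Set.disjoint_left.2 fun e hP' hC' => hPC e hP' hC'
  calc 4 = (P.toSubgraph.neighborSet (P.getVert i)).ncard
        + (C.toSubgraph.neighborSet (P.getVert i)).ncard := by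
        rw [hP.ncard_neighborSet_toSubgraph_internal_eq_two hi0 hin,
          hC.ncard_neighborSet_toSubgraph_eq_two hxC]
    _ ≤ G.degree (P.getVert i) :=
        Subgraph.ncard_neighborSet_add_ncard_neighborSet_le_degree hdisj

lemma IsPath.length_eq_two_of_isCycle {w u v x : V} [Fintype (G.neighborSet x)]
    (hcirc : ∀ y (c : G.Walk y y), c.IsCycle → c.length ≤ 4) {C : G.Walk w w} (hC : C.IsCycle)
    (hxC : x ∈ C.support) (hdeg : G.degree x ≤ 3) {P : G.Walk u v} (hP : P.IsPath)
    (hPC : ∀ e ∈ P.edges, e ∉ C.edges) (huv : u ≠ v) (hnuv : ¬ G.Adj u v) (hxu : G.Adj x u)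
    (hvx : G.Adj v x) : P.length = 2 := by
  have hxP : x ∉ P.support := fun h => by
    have := hP.four_le_degree_of_isCycle hC hxC h hxu.ne hvx.ne' hPC
    omega
  have h4 := hcirc _ _ (hP.isCycle_cons_cons huv hxP hxu hvx)
  have h0 : P.length ≠ 0 := fun h => huv (eq_of_length_eq_zero h)
  have h1 : P.length ≠ 1 := fun h => hnuv (adj_of_length_eq_one h)
  simp only [length_cons] at h4
  omega

end Walk

lemma Reachable.exists_walk_of_induce {s : Set V} {x y : s} (h : (G.induce s).Reachable x y) :
    ∃ p : G.Walk x y, ∀ w ∈ p.support, w ∈ s := by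
  obtain ⟨W⟩ := h
  refine ⟨W.map (Embedding.induce s).toHom, fun w hw => ?_⟩
  obtain ⟨z, -, rfl⟩ := List.mem_map.1 (Walk.support_map _ W ▸ hw)
  exact z.2

lemma Preconnected.mem_of_adj_closed {S : Set V} (hG : G.Preconnected)
    (hS : ∀ x y, x ∈ S → G.Adj x y → y ∈ S) {x : V} (hx : x ∈ S) (y : V) : y ∈ S := by
  by_contra hy
  obtain ⟨W⟩ := hG y x
  obtain ⟨a, b, -, hb, hab, q, hq⟩ := W.exists_walk_notMem_adj_mem hy hx
  exact hq a q.end_mem_support (hS b a hb hab.symm)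

lemma Copy.nonempty_iso_of_surjective {α β : Type*} {A : SimpleGraph α} {B : SimpleGraph β}
    (f : Copy A B) (hf : Function.Surjective f)
    (hadj : ∀ a a', B.Adj (f a) (f a') → A.Adj a a') : Nonempty (A ≃g B) :=
  ⟨⟨Equiv.ofBijective f ⟨f.injective, hf⟩, ⟨hadj _ _, f.toHom.map_adj⟩⟩⟩

-- `_root_` here and below: inside `Copy`, the name `completeBipartiteGraph` means
-- `Copy.completeBipartiteGraph`.
def Copy.completeBipartiteGraphOfAdj {α β : Type*} (a : α → V) (b : β → V)
    (ha : Function.Injective a) (hb : Function.Injective b) (hab : ∀ i j, G.Adj (a i) (b j)) :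
    Copy (_root_.completeBipartiteGraph α β) G :=
  ⟨⟨Sum.elim a b, by rintro (i | i) (j | j) h <;> simp_all [(hab _ _).symm]⟩,
    ha.sumElim hb fun i j => (hab i j).ne⟩

namespace Copy

variable {β : Type*} (f : Copy (_root_.completeBipartiteGraph (Fin 2) β) G)

lemma adj_inl_inr (i : Fin 2) (j : β) : G.Adj (f (Sum.inl i)) (f (Sum.inr j)) :=
  f.toHom.map_adj (by simp)

lemma not_isPath_of_forall_mem_range [Fintype β] (h3 : 3 ≤ Fintype.card β)
    (hcirc : ∀ x (c : G.Walk x x), c.IsCycle → c.length ≤ 4) {j j' : β} (hjj' : j ≠ j')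
    {T : G.Walk (f (Sum.inr j)) (f (Sum.inr j'))}
    (hT : ∀ w ∈ T.support, w ∈ Set.range f → w = f (Sum.inr j) ∨ w = f (Sum.inr j')) :
    ¬ T.IsPath := by
  classical
  intro hTpath
  have hinj : Function.Injective f := f.injective
  obtain ⟨k, -, hk⟩ := Finset.exists_mem_notMem_of_card_lt_card (s := {j, j'})
    (t := Finset.univ) (Finset.card_le_two.trans_lt (by rw [Finset.card_univ]; omega))
  simp only [Finset.mem_insert, Finset.mem_singleton, not_or] at hk
  have hout : ∀ p, p ≠ Sum.inr j → p ≠ Sum.inr j' → f p ∉ T.support := fun p hpj hpj' hp => by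
    rcases hT _ hp ⟨p, rfl⟩ with h | h
    exacts [hpj (hinj h), hpj' (hinj h)]
  -- close `T` up through `f (inl 0)`, the third vertex `f (inr k)` and `f (inl 1)`
  have hcyc : (Walk.cons (f.adj_inl_inr 0 j').symm <| Walk.cons (f.adj_inl_inr 0 k) <|
      Walk.cons (f.adj_inl_inr 1 k).symm <| Walk.cons (f.adj_inl_inr 1 j) T).IsCycle := by
    rw [Walk.isCycle_iff_isPath_tail_and_le_length]
    refine ⟨?_, by simp⟩
    simp [Walk.cons_isPath_iff, hTpath, hinj.eq_iff,
      hout (Sum.inl 0) (by simp) (by simp), hout (Sum.inl 1) (by simp) (by simp),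
      hout (Sum.inr k) (by simp [hk.1]) (by simp [hk.2])]
  have := hcirc _ _ hcyc
  simp only [Walk.length_cons] at this
  exact hjj' (Sum.inr_injective (hinj (Walk.eq_of_length_eq_zero (p := T) (by omega))))

lemma not_adj_inr_inr [Fintype β] (h3 : 3 ≤ Fintype.card β)
    (hcirc : ∀ x (c : G.Walk x x), c.IsCycle → c.length ≤ 4) {j j' : β} (hjj' : j ≠ j') :
    ¬ G.Adj (f (Sum.inr j)) (f (Sum.inr j')) := fun h =>
  f.not_isPath_of_forall_mem_range h3 hcirc hjj' (T := h.toWalk) (by simp) h.isPath_toWalk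

lemma exists_inr_eq_of_adj_inl [Fintype β] [G.LocallyFinite] {i : Fin 2}
    (hdeg : G.degree (f (Sum.inl i)) ≤ Fintype.card β) {y : V}
    (hy : G.Adj (f (Sum.inl i)) y) : ∃ j, f (Sum.inr j) = y := by
  classical
  have hinj : Function.Injective f := f.injective
  have hsub : Finset.univ.image (f ∘ Sum.inr) ⊆ G.neighborFinset (f (Sum.inl i)) := by
    simp [Finset.subset_iff, f.adj_inl_inr]
  have hcard : (G.neighborFinset (f (Sum.inl i))).card
      ≤ (Finset.univ.image (f ∘ Sum.inr)).card := by
    rwa [card_neighborFinset_eq_degree,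
      Finset.card_image_of_injective _ (hinj.comp Sum.inr_injective), Finset.card_univ]
  have hy' := (G.mem_neighborFinset _ y).2 hy
  rw [← Finset.eq_of_subset_of_card_le hsub hcard] at hy'
  simpa using hy'

lemma mem_range_of_adj [Fintype β] [G.LocallyFinite] (h3 : 3 ≤ Fintype.card β)
    (hcirc : ∀ x (c : G.Walk x x), c.IsCycle → c.length ≤ 4)
    (hdeg : ∀ i, G.degree (f (Sum.inl i)) ≤ Fintype.card β)
    (h2conn : ∀ x, (G.induce {x}ᶜ).Connected) {x y : V} (hx : x ∈ Set.range f)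
    (hxy : G.Adj x y) : y ∈ Set.range f := by
  classical
  obtain ⟨i | j, rfl⟩ := hx
  · obtain ⟨j, rfl⟩ := f.exists_inr_eq_of_adj_inl (hdeg i) hxy
    exact ⟨_, rfl⟩
  by_contra hy
  have hinj : Function.Injective f := f.injective
  obtain ⟨R, hR⟩ := ((h2conn (f (Sum.inr j))).preconnected ⟨y, hxy.ne'⟩
    ⟨f (Sum.inl 0), by simp [hinj.eq_iff]⟩).exists_walk_of_induce
  obtain ⟨a, _, hbR, ⟨p, rfl⟩, hab, q, hq⟩ := R.exists_walk_notMem_adj_mem hy ⟨_, rfl⟩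
  rcases p with i | j'
  · obtain ⟨j', rfl⟩ := f.exists_inr_eq_of_adj_inl (hdeg i) hab.symm
    exact hq _ q.end_mem_support ⟨_, rfl⟩
  have hjj' : j ≠ j' := by
    rintro rfl
    exact hR _ hbR rfl
  refine f.not_isPath_of_forall_mem_range h3 hcirc hjj'
    (T := (Walk.cons hxy (q.concat hab)).bypass) (fun w hw hwf => ?_) (Walk.bypass_isPath _)
  have := Walk.support_bypass_subset_support _ hw
  simp only [Walk.support_cons, Walk.support_concat, List.mem_cons, List.mem_append,
    List.mem_nil_iff, or_false] at this
  rcases this with h | h | h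
  exacts [Or.inl h, (hq w h hwf).elim, Or.inr h]

theorem nonempty_iso_completeBipartiteGraph [Fintype β] [G.LocallyFinite]
    (h3 : 3 ≤ Fintype.card β) (hconn : G.Connected) (h2conn : ∀ x, (G.induce {x}ᶜ).Connected)
    (hcirc : ∀ x (c : G.Walk x x), c.IsCycle → c.length ≤ 4)
    (hdeg : ∀ i, G.degree (f (Sum.inl i)) ≤ Fintype.card β) :
    Nonempty (_root_.completeBipartiteGraph (Fin 2) β ≃g G) := by
  have hinj : Function.Injective f := f.injective
  refine f.nonempty_iso_of_surjective (fun y => hconn.preconnected.mem_of_adj_closed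
    (fun _ _ => f.mem_range_of_adj h3 hcirc hdeg h2conn) ⟨Sum.inl 0, rfl⟩ y) ?_
  rintro (i | j) (i' | j') h
  · obtain ⟨j, hj⟩ := f.exists_inr_eq_of_adj_inl (hdeg i) h
    exact absurd (hinj hj) (by simp)
  · simp
  · simp
  · exact absurd h (f.not_adj_inr_inr h3 hcirc fun hjj' => h.ne (by rw [hjj']))

end Copy

end SimpleGraph

theorem K23_configuration_forces_K23_general
    {V : Type} [Fintype V] [DecidableEq V]
    (G : SimpleGraph V) [DecidableRel G.Adj]
    (hconn : G.Connected)
    (h2conn : ∀ x : V, (G.induce (↑({x}ᶜ : Finset V) : Set V)).Connected)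
    (hdeg : ∀ v : V, G.degree v ≤ 3)
    (w : V) (C : G.Walk w w) (hC : C.IsCycle)
    (hlong : ∀ (x : V) (C₂ : G.Walk x x), C₂.IsCycle → C₂.length ≤ C.length)
    (u v : V) (huv : u ≠ v) (hu : u ∈ C.support) (hv : v ∈ C.support)
    (P : G.Walk u v) (hP : P.IsPath)
    (hPC : ∀ e ∈ P.edges, e ∉ C.edges)
    (u₁ u₂ : V) (h12 : u₁ ≠ u₂)
    (hNu : {x : V | G.Adj u x ∧ x ∈ C.support} = {u₁, u₂})
    (hNv : {x : V | G.Adj v x ∧ x ∈ C.support} = {u₁, u₂}) :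
    Nonempty (G ≃g completeBipartiteGraph (Fin 2) (Fin 3)) := by
  have hCu := hC.neighborSet_toSubgraph_eq_pair hu h12 hNu.le
  have hCv := hC.neighborSet_toSubgraph_eq_pair hv h12 hNv.le
  have hcirc : ∀ x (D : G.Walk x x), D.IsCycle → D.length ≤ 4 :=
    hC.length_eq_four_of_neighborSet_eq hu hv huv (hCu.trans hCv.symm) ▸ hlong
  obtain ⟨⟨hu₁, hu₁C⟩, hu₂, hv₁, hv₂⟩ : (G.Adj u u₁ ∧ u₁ ∈ C.support) ∧ G.Adj u u₂ ∧
      G.Adj v u₁ ∧ G.Adj v u₂ :=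
    ⟨hNu.ge (by simp), (hNu.ge (by simp)).1, (hNv.ge (by simp)).1, (hNv.ge (by simp)).1⟩
  have hnuv : ¬ G.Adj u v := fun h => by
    rcases hNu.le ⟨h, hv⟩ with rfl | rfl
    exacts [hv₁.ne rfl, hv₂.ne rfl]
  obtain ⟨t, hut, htv, rfl⟩ := Walk.exists_eq_cons_cons_nil_of_length_eq_two <|
    hP.length_eq_two_of_isCycle hcirc hC hu₁C (hdeg u₁) hPC huv hnuv hu₁.symm hv₁
  have ht : t ∉ ({u₁, u₂} : Set V) := fun ht =>
    hPC s(u, t) (by simp) (Walk.adj_toSubgraph_iff_mem_edges.1 (hCu.ge ht))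
  simp only [Set.mem_insert_iff, Set.mem_singleton_iff, not_or] at ht
  let f := Copy.completeBipartiteGraphOfAdj (G := G) ![u, v] ![u₁, u₂, t]
    (by intro i j; fin_cases i <;> fin_cases j <;> simp [huv, huv.symm])
    (by intro i j; fin_cases i <;> fin_cases j <;> simp [h12, h12.symm, ht.1, ht.2,
      Ne.symm ht.1, Ne.symm ht.2])
    (by intro i j; fin_cases i <;> fin_cases j <;> simp [hu₁, hu₂, hv₁, hv₂, hut, htv.symm])
  refine (f.nonempty_iso_completeBipartiteGraph (by simp) hconn (fun x => ?_) hcirc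
    (fun i => by simpa using hdeg _)).map Iso.symm
  rw [← Finset.coe_singleton, ← Finset.coe_compl]
  exact h2conn x

theorem K23_configuration_forces_K23
    {V : Type} [Fintype V] [DecidableEq V]
    (G : SimpleGraph V) [DecidableRel G.Adj]
    (hcard : 3 ≤ Fintype.card V) (hconn : G.Connected)
    (h2conn : ∀ x : V, (G.induce (↑({x}ᶜ : Finset V) : Set V)).Connected)
    (hK4 : ¬ HasK4Minor G)
    (hdeg : ∀ v : V, G.degree v ≤ 3)
    (w : V) (C : G.Walk w w) (hC : C.IsCycle)
    (hlong : ∀ (x : V) (C₂ : G.Walk x x), C₂.IsCycle → C₂.length ≤ C.length)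
    (u v : V) (huv : u ≠ v) (hu : u ∈ C.support) (hv : v ∈ C.support)
    (P : G.Walk u v) (hP : P.IsPath)
    (hPC : ∀ e ∈ P.edges, e ∉ C.edges)
    (u₁ u₂ : V) (h12 : u₁ ≠ u₂)
    (hNu : {x : V | G.Adj u x ∧ x ∈ C.support} = {u₁, u₂})
    (hNv : {x : V | G.Adj v x ∧ x ∈ C.support} = {u₁, u₂}) :
    Nonempty (G ≃g completeBipartiteGraph (Fin 2) (Fin 3)) :=
  K23_configuration_forces_K23_general G hconn h2conn hdeg w C hC hlong u v huv hu hv P hP hPC u₁ u₂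
    h12 hNu hNv
end
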